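/- Let 0 < p < q < ∞ and let M be the centered B-spline of order r. There is a constant C = C(p,q,r,d) such that for every k ∈ ℤ_+^d and every g in the span Σ_r^d(k) of the B-splines M_{k,s}, s ∈ J^d(k), one has the Nikol'skii-type inequality ‖g‖_{L_q([0,1]^d)} ≤ C·2^{(1/p - 1/q)|k|_1} ‖g‖_{L_p([0,1]^d)}. -/

import Mathlib

/-!
On a dyadic cell `∏ i, [m i, m i + 1] / 2 ^ k i` the affine change of variables onto the unit
cube turns a spline of level `k` into a combination of the finitely many B-splines `M_{0,s}` with
`|s i| ≤ r + 1`. On this finite-dimensional space the `L^∞` and `L^p` quasi-norms are equivalent: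
for `p ≥ 1` by equivalence of norms, for `p < 1` by combining the case `p = 1` with
`‖f‖₁ ≤ ‖f‖_∞ ^ (1 - p) ‖f‖_p ^ p`. As a cell has volume `2 ^ (-|k|₁)`, undoing the change of
variables gives `‖g‖_∞ ≤ C 2 ^ (|k|₁ / p) ‖g‖_p` on every cell and hence on the cube, and
`‖g‖_q ≤ ‖g‖_∞ ^ (1 - p / q) ‖g‖_p ^ (p / q)` concludes.
-/

open MeasureTheory

/-- `centeredBSpline n` is the centered B-spline of order `n+1`. -/
noncomputable def centeredBSpline : ℕ → ℝ → ℝ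
  | 0 => Set.indicator (Set.Ico (-(1 : ℝ) / 2) (1 / 2)) fun _ => 1
  | n + 1 => fun x => ∫ t in Set.Icc (-(1 : ℝ) / 2) (1 / 2), centeredBSpline n (x - t)

/-- The mixed tensor-product B-spline `M_{k,s}(x) = ∏_i M(2^{k_i} x_i - s_i)`. -/
noncomputable def mixedBSpline (r d : ℕ) (k : Fin d → ℕ) (s : Fin d → ℤ)
    (x : Fin d → ℝ) : ℝ :=
  ∏ i, centeredBSpline (r - 1) ((2 : ℝ) ^ k i * x i - s i)

/-- The index set `J^d(k)`. -/
def mixedIndexSet (r d : ℕ) (k : Fin d → ℕ) : Set (Fin d → ℤ) :=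
  {s | ∀ i, -(r : ℝ) / 2 < (s i : ℝ) ∧ (s i : ℝ) < 2 ^ k i + r / 2}

/-- The unit cube `[0,1]^d`. -/
def unitCube (d : ℕ) : Set (Fin d → ℝ) := Set.univ.pi fun _ => Set.Icc 0 1

open scoped ENNReal NNReal

theorem LinearMap.exists_norm_le_mul_norm_of_ker_le {𝕜 E F G : Type*}
    [NontriviallyNormedField 𝕜] [CompleteSpace 𝕜] [AddCommGroup E] [Module 𝕜 E]
    [FiniteDimensional 𝕜 E] [NormedAddCommGroup F] [NormedSpace 𝕜 F]
    [NormedAddCommGroup G] [NormedSpace 𝕜 G] (T : E →ₗ[𝕜] F) (S : E →ₗ[𝕜] G)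
    (h : LinearMap.ker T ≤ LinearMap.ker S) :
    ∃ C : ℝ≥0, ∀ x, ‖S x‖₊ ≤ C * ‖T x‖₊ := by
  -- The first projection is injective on the (finite-dimensional) range of `x ↦ (T x, S x)`.
  set R := LinearMap.range (T.prod S)
  have hinj : LinearMap.ker ((LinearMap.fst 𝕜 F G).comp R.subtype) = ⊥ := by
    refine LinearMap.ker_eq_bot'.mpr fun ⟨_, x, rfl⟩ hx => ?_
    have hTx : T x = 0 := hx
    have hSx : S x = 0 := h hTx
    ext <;> simp [hTx, hSx]
  obtain ⟨C, -, hC⟩ := ((LinearMap.fst 𝕜 F G).comp R.subtype).exists_antilipschitzWith hinj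
  refine ⟨C, fun x => ?_⟩
  calc ‖S x‖₊ ≤ ‖(T x, S x)‖₊ := by rw [Prod.nnnorm_def]; exact le_max_right _ _
    _ = ‖(⟨(T x, S x), x, rfl⟩ : R)‖₊ := rfl
    _ ≤ C * ‖T x‖₊ := ZeroHomClass.bound_of_antilipschitz _ hC _

namespace MeasureTheory

section LinearCombination

variable {α ι E : Type*} [MeasurableSpace α] [Fintype ι] [NormedAddCommGroup E]
  [NormedSpace ℝ E] {μ : Measure α} {p : ℝ≥0∞} {φ : ι → α → E}

theorem memLp_sum_smul (hφ : ∀ t, MemLp (φ t) p μ) (c : ι → ℝ) :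
    MemLp (∑ t, c t • φ t) p μ :=
  memLp_finsetSum' _ fun t _ => (hφ t).const_smul (c t)

noncomputable def linearCombinationLp (hφ : ∀ t, MemLp (φ t) p μ) :
    (ι → ℝ) →ₗ[ℝ] Lp E p μ where
  toFun c := (memLp_sum_smul hφ c).toLp _
  map_add' c c' := by
    rw [← MemLp.toLp_add]
    congr 1
    simp only [Pi.add_apply, add_smul, Finset.sum_add_distrib]
  map_smul' a c := by
    rw [RingHom.id_apply, ← MemLp.toLp_const_smul]
    congr 1
    simp only [Pi.smul_apply, smul_eq_mul, mul_smul, Finset.smul_sum]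

theorem enorm_linearCombinationLp (hφ : ∀ t, MemLp (φ t) p μ) (c : ι → ℝ) :
    ‖linearCombinationLp hφ c‖ₑ = eLpNorm (∑ t, c t • φ t) p μ :=
  Lp.enorm_toLp (memLp_sum_smul hφ c)

theorem exists_eLpNorm_sum_smul_le {p₁ p₂ : ℝ≥0∞} [Fact (1 ≤ p₁)] [Fact (1 ≤ p₂)]
    (h₁ : ∀ t, MemLp (φ t) p₁ μ) (h₂ : ∀ t, MemLp (φ t) p₂ μ) :
    ∃ C : ℝ≥0, ∀ c : ι → ℝ,
      eLpNorm (∑ t, c t • φ t) p₂ μ ≤ C * eLpNorm (∑ t, c t • φ t) p₁ μ := by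
  have hker : LinearMap.ker (linearCombinationLp h₁) ≤ LinearMap.ker (linearCombinationLp h₂) := by
    intro c hc
    rw [LinearMap.mem_ker, ← enorm_eq_zero, enorm_linearCombinationLp] at hc ⊢
    rw [eLpNorm_eq_zero_iff (memLp_sum_smul h₁ c).1 (zero_lt_one.trans_le Fact.out).ne'] at hc
    rw [eLpNorm_congr_ae hc, eLpNorm_zero]
  obtain ⟨C, hC⟩ := LinearMap.exists_norm_le_mul_norm_of_ker_le _ _ hker
  refine ⟨C, fun c => ?_⟩
  rw [← enorm_linearCombinationLp h₁, ← enorm_linearCombinationLp h₂]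
  simpa only [enorm_eq_nnnorm, ← ENNReal.coe_mul, ENNReal.coe_le_coe] using hC c

end LinearCombination

variable {α E : Type*} [MeasurableSpace α] [NormedAddCommGroup E] {μ : Measure α}

theorem eLpNorm_le_eLpNorm_top_rpow_mul_eLpNorm_rpow {f : α → E} {p q : ℝ}
    (hp : 0 < p) (hpq : p ≤ q) (hf : eLpNorm f ∞ μ ≠ ∞) :
    eLpNorm f (ENNReal.ofReal q) μ ≤
      eLpNorm f ∞ μ ^ (1 - p / q) * eLpNorm f (ENNReal.ofReal p) μ ^ (p / q) := by
  have hq : 0 < q := hp.trans_le hpq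
  set M := eLpNorm f ∞ μ
  have hbound : ∀ᵐ x ∂μ, ‖f x‖ₑ ^ q ≤ M ^ (q - p) * ‖f x‖ₑ ^ p := by
    filter_upwards [ae_le_eLpNormEssSup (f := f)] with x hx
    rw [← eLpNorm_exponent_top] at hx
    calc ‖f x‖ₑ ^ q = ‖f x‖ₑ ^ (q - p) * ‖f x‖ₑ ^ p := by
          rw [← ENNReal.rpow_add_of_nonneg _ _ (sub_nonneg.2 hpq) hp.le, sub_add_cancel]
      _ ≤ M ^ (q - p) * ‖f x‖ₑ ^ p := by
          gcongr
  rw [eLpNorm_eq_lintegral_rpow_enorm_toReal (by simpa using hq) ENNReal.ofReal_ne_top,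
    eLpNorm_eq_lintegral_rpow_enorm_toReal (by simpa using hp) ENNReal.ofReal_ne_top,
    ENNReal.toReal_ofReal hq.le, ENNReal.toReal_ofReal hp.le]
  calc (∫⁻ x, ‖f x‖ₑ ^ q ∂μ) ^ (1 / q)
      ≤ (M ^ (q - p) * ∫⁻ x, ‖f x‖ₑ ^ p ∂μ) ^ (1 / q) := by
        gcongr
        rw [← lintegral_const_mul' _ _ (ENNReal.rpow_ne_top_of_nonneg (by linarith) hf)]
        exact lintegral_mono_ae hbound
    _ = M ^ (1 - p / q) * ((∫⁻ x, ‖f x‖ₑ ^ p ∂μ) ^ (1 / p)) ^ (p / q) := by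
        rw [ENNReal.mul_rpow_of_nonneg _ _ (by positivity), ← ENNReal.rpow_mul,
          ← ENNReal.rpow_mul]
        congr 2 <;> field_simp

theorem eLpNorm_le_rpow_mul_eLpNorm_of_eLpNorm_top_le {f : α → E} {p q : ℝ} (hp : 0 < p) (hpq : p < q) {K : ℝ≥0∞}
    (h : eLpNorm f ∞ μ ≤ K * eLpNorm f (ENNReal.ofReal p) μ) :
    eLpNorm f (ENNReal.ofReal q) μ ≤ K ^ (1 - p / q) * eLpNorm f (ENNReal.ofReal p) μ := by
  set L := eLpNorm f (ENNReal.ofReal p) μ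
  have he : 0 < 1 - p / q := by
    rw [sub_pos, div_lt_one (hp.trans hpq)]
    exact hpq
  rcases eq_or_ne (eLpNorm f ∞ μ) ∞ with hM | hM
  · rw [hM, top_le_iff, ENNReal.mul_eq_top] at h
    have htop : K ^ (1 - p / q) * L = ∞ := by
      rcases h with ⟨hK, hL⟩ | ⟨hK, hL⟩
      · rw [hL, ENNReal.mul_top]
        simp [ENNReal.rpow_eq_zero_iff, hK, he.le.not_gt]
      · rw [hK, ENNReal.top_rpow_of_pos he, ENNReal.top_mul hL]
    rw [htop]
    exact le_top
  calc eLpNorm f (ENNReal.ofReal q) μ ≤ eLpNorm f ∞ μ ^ (1 - p / q) * L ^ (p / q) :=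
        eLpNorm_le_eLpNorm_top_rpow_mul_eLpNorm_rpow hp hpq.le hM
    _ ≤ (K * L) ^ (1 - p / q) * L ^ (p / q) := by gcongr
    _ = K ^ (1 - p / q) * L := by
        rw [ENNReal.mul_rpow_of_nonneg _ _ he.le, mul_assoc,
          ← ENNReal.rpow_add_of_nonneg _ _ he.le (div_pos hp (hp.trans hpq)).le, sub_add_cancel,
          ENNReal.rpow_one]

theorem eLpNorm_top_restrict_le_of_subset_biUnion {ι : Type*} {f : α → E} {p K : ℝ≥0∞}
    {s : Set α} {t : ι → Set α} {I : Set ι} (hI : I.Countable) (hcover : s ⊆ ⋃ i ∈ I, t i)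
    (hsub : ∀ i ∈ I, t i ⊆ s)
    (h : ∀ i ∈ I, eLpNorm f ∞ (μ.restrict (t i)) ≤ K * eLpNorm f p (μ.restrict (t i))) :
    eLpNorm f ∞ (μ.restrict s) ≤ K * eLpNorm f p (μ.restrict s) := by
  rw [eLpNorm_exponent_top]
  refine eLpNormEssSup_le_of_ae_enorm_bound (ae_restrict_of_ae_restrict_of_subset hcover ?_)
  refine (ae_restrict_biUnion_iff _ hI _).2 fun i hi => ?_
  filter_upwards [ae_le_eLpNormEssSup (μ := μ.restrict (t i)) (f := f)] with x hx
  rw [← eLpNorm_exponent_top] at hx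
  refine hx.trans ((h i hi).trans ?_)
  gcongr
  exact hsub i hi

theorem exists_eLpNorm_top_sum_smul_le {ι : Type*} [Fintype ι] [NormedSpace ℝ E]
    [IsFiniteMeasure μ] {φ : ι → α → E} (hφ : ∀ t, MemLp (φ t) ∞ μ) {p : ℝ} (hp : 0 < p) :
    ∃ C : ℝ≥0, ∀ c : ι → ℝ,
      eLpNorm (∑ t, c t • φ t) ∞ μ ≤ C * eLpNorm (∑ t, c t • φ t) (ENNReal.ofReal p) μ := by
  rcases le_or_gt 1 p with hp1 | hp1
  · have : Fact (1 ≤ ENNReal.ofReal p) := ⟨by simpa using hp1⟩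
    exact exists_eLpNorm_sum_smul_le (fun t => (hφ t).mono_exponent le_top) hφ
  -- For `p < 1`, combine the bound by the `L¹` norm with `‖f‖₁ ≤ ‖f‖_∞ ^ (1 - p) ‖f‖_p ^ p`.
  obtain ⟨C, hC⟩ :=
    exists_eLpNorm_sum_smul_le (p₁ := 1) (fun t => (hφ t).mono_exponent le_top) hφ
  refine ⟨C ^ (1 / p), fun c => ?_⟩
  set M := eLpNorm (∑ t, c t • φ t) ∞ μ
  set L := eLpNorm (∑ t, c t • φ t) (ENNReal.ofReal p) μ
  have hM : M ≠ ∞ := (memLp_sum_smul hφ c).eLpNorm_ne_top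
  rcases eq_or_ne M 0 with hM0 | hM0
  · simp [hM0]
  have hML : M ≤ C * (M ^ (1 - p) * L ^ p) := by
    refine (hC c).trans ?_
    gcongr
    simpa only [ENNReal.ofReal_one, div_one] using
      eLpNorm_le_eLpNorm_top_rpow_mul_eLpNorm_rpow (q := 1) hp hp1.le hM
  have hMp : M ^ p ≤ C * L ^ p := by
    have h0 : M ^ (1 - p) ≠ 0 := (ENNReal.rpow_pos (pos_iff_ne_zero.2 hM0) hM).ne'
    have htop : M ^ (1 - p) ≠ ∞ := ENNReal.rpow_ne_top_of_nonneg (by linarith) hM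
    refine (ENNReal.mul_le_mul_iff_left h0 htop).1 ?_
    rw [← ENNReal.rpow_add _ _ hM0 hM, add_sub_cancel, ENNReal.rpow_one, mul_assoc,
      mul_comm (L ^ p)]
    exact hML
  calc M = (M ^ p) ^ (1 / p) := by
        rw [← ENNReal.rpow_mul, mul_one_div_cancel hp.ne', ENNReal.rpow_one]
    _ ≤ (C * L ^ p) ^ (1 / p) := by gcongr
    _ = (C ^ (1 / p) : ℝ≥0) * L := by
      rw [ENNReal.mul_rpow_of_nonneg _ _ (by positivity), ← ENNReal.rpow_mul,
        mul_one_div_cancel hp.ne', ENNReal.rpow_one, ENNReal.coe_rpow_of_nonneg _ (by positivity)]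

end MeasureTheory

theorem Real.map_volume_pi_mul_add {ι : Type*} [Fintype ι] (c b : ι → ℝ) (hc : ∀ i, c i ≠ 0) :
    Measure.map (fun (y : ι → ℝ) i => c i * (y i + b i)) volume =
      ENNReal.ofReal |(∏ i, c i)⁻¹| • volume := by
  classical
  have hdecomp : (fun (y : ι → ℝ) i => c i * (y i + b i)) =
      Matrix.toLin' (Matrix.diagonal c) ∘ (· + b) := by
    ext y i
    simp [Matrix.mulVec_diagonal]
  rw [hdecomp, ← Measure.map_map (LinearMap.continuous_on_pi _).measurable (measurable_add_const b),
    map_add_right_eq_self, Real.map_linearMap_volume_pi_eq_smul_volume_pi,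
    LinearMap.det_toLin', Matrix.det_diagonal]
  rw [LinearMap.det_toLin', Matrix.det_diagonal]
  exact Finset.prod_ne_zero_iff.2 fun i _ => hc i

theorem measurableEmbedding_pi_mul_add {ι : Type*} [Fintype ι] (c b : ι → ℝ)
    (hc : ∀ i, c i ≠ 0) : MeasurableEmbedding fun (y : ι → ℝ) i => c i * (y i + b i) :=
  ((Homeomorph.addRight b).trans
    (Homeomorph.piCongrRight fun i => Homeomorph.mulLeft₀ (c i) (hc i))).measurableEmbedding

theorem Int.exists_mem_Ico_and_mem_Icc {N : ℤ} (hN : 0 < N) {y : ℝ}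
    (hy : y ∈ Set.Icc 0 (N : ℝ)) : ∃ m ∈ Set.Ico 0 N, y ∈ Set.Icc (m : ℝ) (m + 1) := by
  refine ⟨min ⌊y⌋ (N - 1), ⟨le_min (Int.floor_nonneg.2 hy.1) (by omega), by omega⟩,
    (Int.cast_le.2 (min_le_left _ _)).trans (Int.floor_le y), ?_⟩
  rcases min_choice ⌊y⌋ (N - 1) with h | h <;> rw [h]
  · exact (Int.lt_floor_add_one y).le
  · push_cast
    linarith [hy.2]

theorem centeredBSpline_nonneg : ∀ (n : ℕ) (x : ℝ), 0 ≤ centeredBSpline n x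
  | 0, x => Set.indicator_nonneg (fun _ _ => zero_le_one) x
  | n + 1, _ => integral_nonneg fun _ => centeredBSpline_nonneg n _

theorem centeredBSpline_le_one : ∀ (n : ℕ) (x : ℝ), centeredBSpline n x ≤ 1
  | 0, x => Set.indicator_le_self' (fun _ _ => zero_le_one) x
  | n + 1, x => by
    have h : ‖centeredBSpline (n + 1) x‖ ≤ 1 * volume.real (Set.Icc (-(1 : ℝ) / 2) (1 / 2)) :=
      norm_setIntegral_le_of_norm_le_const measure_Icc_lt_top fun t _ => by
        rw [Real.norm_of_nonneg (centeredBSpline_nonneg n _)]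
        exact centeredBSpline_le_one n _
    rw [Real.volume_real_Icc] at h
    exact (le_abs_self _).trans (h.trans_eq (by norm_num))

theorem measurable_centeredBSpline : ∀ n, Measurable (centeredBSpline n)
  | 0 => measurable_const.indicator measurableSet_Ico
  | n + 1 => ((measurable_centeredBSpline n).comp
      (measurable_fst.sub measurable_snd)).stronglyMeasurable.integral_prod_right'.measurable

theorem centeredBSpline_eq_zero_of_lt_abs :
    ∀ {n : ℕ} {x : ℝ}, ((n : ℝ) + 1) / 2 < |x| → centeredBSpline n x = 0
  | 0, x, hx => by
    refine Set.indicator_of_notMem (fun hmem => ?_) _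
    rw [Set.mem_Ico] at hmem
    have := abs_le.2 (⟨by linarith [hmem.1], hmem.2.le⟩ : -(1 / 2 : ℝ) ≤ x ∧ x ≤ 1 / 2)
    norm_num at hx
    linarith
  | n + 1, x, hx => by
    refine (setIntegral_congr_fun measurableSet_Icc fun t ht => ?_).trans
      (by simp : ∫ _ in Set.Icc (-(1 : ℝ) / 2) (1 / 2), (0 : ℝ) = 0)
    refine centeredBSpline_eq_zero_of_lt_abs ?_
    have : |t| ≤ 1 / 2 := abs_le.2 ⟨by linarith [ht.1], ht.2⟩
    have := abs_sub_abs_le_abs_sub x t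
    push_cast at hx
    linarith

theorem measurable_mixedBSpline (r d : ℕ) (k : Fin d → ℕ) (s : Fin d → ℤ) :
    Measurable (mixedBSpline r d k s) :=
  Finset.measurable_prod _ fun i _ =>
    (measurable_centeredBSpline _).comp (((measurable_pi_apply i).const_mul _).sub_const _)

theorem norm_mixedBSpline_le_one (r d : ℕ) (k : Fin d → ℕ) (s : Fin d → ℤ) (x : Fin d → ℝ) :
    ‖mixedBSpline r d k s x‖ ≤ 1 := by
  rw [mixedBSpline, norm_prod]
  exact Finset.prod_le_one (fun _ _ => norm_nonneg _) fun i _ =>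
    (Real.norm_of_nonneg (centeredBSpline_nonneg _ _)).trans_le (centeredBSpline_le_one _ _)

noncomputable def unitCubeSplineIndices (r d : ℕ) : Finset (Fin d → ℤ) :=
  Fintype.piFinset fun _ => Finset.Icc (-(r : ℤ) - 1) (r + 1)

theorem mixedBSpline_zero_eq_zero_of_notMem {r d : ℕ} {s : Fin d → ℤ} {y : Fin d → ℝ}
    (hy : y ∈ unitCube d) (hs : s ∉ unitCubeSplineIndices r d) :
    mixedBSpline r d 0 s y = 0 := by
  simp only [unitCubeSplineIndices, Fintype.mem_piFinset, Finset.mem_Icc, not_forall] at hs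
  obtain ⟨i, hi⟩ := hs
  refine Finset.prod_eq_zero (Finset.mem_univ i) (centeredBSpline_eq_zero_of_lt_abs ?_)
  have hyi := hy i (Set.mem_univ i)
  have hr : ((r - 1 : ℕ) : ℝ) ≤ r := by exact_mod_cast Nat.sub_le r 1
  have hsi : (s i : ℝ) ≤ -r - 2 ∨ (r : ℝ) + 2 ≤ s i := by
    rcases not_and_or.1 hi with h | h
    · left; exact_mod_cast (by omega : s i ≤ -r - 2)
    · right; exact_mod_cast (by omega : (r : ℤ) + 2 ≤ s i)
  simp only [Pi.zero_apply, pow_zero, one_mul]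
  rcases hsi with h | h
  · rw [abs_of_pos (by linarith [hyi.1])]; linarith [hyi.1]
  · rw [abs_of_neg (by linarith [hyi.2])]; linarith [hyi.2]

theorem measurableSet_unitCube (d : ℕ) : MeasurableSet (unitCube d) :=
  MeasurableSet.univ_pi fun _ => measurableSet_Icc

instance isFiniteMeasure_volume_restrict_unitCube (d : ℕ) :
    IsFiniteMeasure (volume.restrict (unitCube d)) :=
  isFiniteMeasure_restrict.2 (isCompact_univ_pi fun _ => isCompact_Icc).measure_lt_top.ne

noncomputable def dyadicCellMap {d : ℕ} (k : Fin d → ℕ) (m : Fin d → ℤ) (y : Fin d → ℝ) :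
    Fin d → ℝ :=
  fun i => ((2 : ℝ) ^ k i)⁻¹ * (y i + m i)

def dyadicCell {d : ℕ} (k : Fin d → ℕ) (m : Fin d → ℤ) : Set (Fin d → ℝ) :=
  Set.univ.pi fun i => Set.Icc (((2 : ℝ) ^ k i)⁻¹ * m i) (((2 : ℝ) ^ k i)⁻¹ * (1 + m i))

section DyadicCell

variable {d : ℕ} (k : Fin d → ℕ) (m : Fin d → ℤ)

theorem measurableSet_dyadicCell :
    MeasurableSet (dyadicCell k m) :=
  MeasurableSet.univ_pi fun _ => measurableSet_Icc

theorem preimage_dyadicCellMap_dyadicCell :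
    dyadicCellMap k m ⁻¹' dyadicCell k m = unitCube d := by
  ext y
  simp only [dyadicCell, dyadicCellMap, unitCube, Set.mem_preimage, Set.mem_univ_pi,
    Set.mem_Icc]
  refine forall_congr' fun i => ?_
  have hc : (0 : ℝ) < ((2 : ℝ) ^ k i)⁻¹ := by positivity
  rw [mul_le_mul_iff_right₀ hc, mul_le_mul_iff_right₀ hc]
  constructor <;> rintro ⟨h₁, h₂⟩ <;> constructor <;> linarith

theorem mixedBSpline_dyadicCellMap (r : ℕ) (s : Fin d → ℤ) (y : Fin d → ℝ) :
    mixedBSpline r d k s (dyadicCellMap k m y) = mixedBSpline r d 0 (s - m) y := by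
  refine Finset.prod_congr rfl fun i _ => congrArg _ ?_
  simp only [dyadicCellMap, Pi.sub_apply, Pi.zero_apply, Int.cast_sub, pow_zero, one_mul]
  rw [mul_inv_cancel_left₀ (by positivity)]
  ring

theorem measurableEmbedding_dyadicCellMap : MeasurableEmbedding (dyadicCellMap k m) :=
  measurableEmbedding_pi_mul_add _ _ fun _ => by positivity

theorem map_dyadicCellMap_volume :
    Measure.map (dyadicCellMap k m) volume = (2 : ℝ≥0∞) ^ (∑ i, k i) • volume := by
  unfold dyadicCellMap
  rw [Real.map_volume_pi_mul_add _ _ fun _ => by positivity,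
    Finset.prod_inv_distrib, inv_inv, Finset.prod_pow_eq_pow_sum, abs_of_pos (by positivity),
    ENNReal.ofReal_pow zero_le_two, ENNReal.ofReal_ofNat]

theorem map_dyadicCellMap_volume_restrict_unitCube :
    Measure.map (dyadicCellMap k m) (volume.restrict (unitCube d)) =
      (2 : ℝ≥0∞) ^ (∑ i, k i) • volume.restrict (dyadicCell k m) := by
  rw [← preimage_dyadicCellMap_dyadicCell k m,
    ← Measure.restrict_map (measurableEmbedding_dyadicCellMap k m).measurable
      (measurableSet_dyadicCell k m), map_dyadicCellMap_volume, Measure.restrict_smul]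

theorem eLpNorm_comp_dyadicCellMap {E : Type*} [NormedAddCommGroup E] (g : (Fin d → ℝ) → E)
    (p : ℝ≥0∞) :
    eLpNorm (g ∘ dyadicCellMap k m) p (volume.restrict (unitCube d)) =
      ((2 : ℝ≥0∞) ^ (∑ i, k i)) ^ (1 / p).toReal *
        eLpNorm g p (volume.restrict (dyadicCell k m)) := by
  rw [← (measurableEmbedding_dyadicCellMap k m).eLpNorm_map_measure,
    map_dyadicCellMap_volume_restrict_unitCube,
    eLpNorm_smul_measure_of_ne_zero (by simp), smul_eq_mul]

theorem dyadicCell_subset_unitCube {m : Fin d → ℤ}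
    (hm : m ∈ Set.univ.pi fun i => Set.Ico 0 (2 ^ k i)) : dyadicCell k m ⊆ unitCube d := by
  intro x hx i _
  obtain ⟨h₁, h₂⟩ := hx i (Set.mem_univ i)
  obtain ⟨hm₁, hm₂⟩ := hm i (Set.mem_univ i)
  have hm₁ : (0 : ℝ) ≤ m i := by exact_mod_cast hm₁
  have hm₂ : 1 + (m i : ℝ) ≤ 2 ^ k i := by exact_mod_cast (by omega : 1 + m i ≤ 2 ^ k i)
  have hc : (0 : ℝ) < ((2 : ℝ) ^ k i)⁻¹ := by positivity
  constructor
  · nlinarith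
  · calc x i ≤ ((2 : ℝ) ^ k i)⁻¹ * (1 + m i) := h₂
      _ ≤ ((2 : ℝ) ^ k i)⁻¹ * 2 ^ k i := by gcongr
      _ = 1 := inv_mul_cancel₀ (by positivity)

theorem unitCube_subset_biUnion_dyadicCell :
    unitCube d ⊆ ⋃ m ∈ Set.univ.pi (fun i => Set.Ico (0 : ℤ) (2 ^ k i)), dyadicCell k m := by
  intro x hx
  have hcell : ∀ i, ∃ m ∈ Set.Ico (0 : ℤ) (2 ^ k i),
      2 ^ k i * x i ∈ Set.Icc (m : ℝ) (m + 1) := fun i => by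
    obtain ⟨h₁, h₂⟩ := hx i (Set.mem_univ i)
    refine Int.exists_mem_Ico_and_mem_Icc (by positivity) ⟨by positivity, ?_⟩
    push_cast
    nlinarith [pow_pos (two_pos : (0 : ℝ) < 2) (k i)]
  choose m hm hxm using hcell
  refine Set.mem_biUnion (x := m) (fun i _ => hm i) fun i _ => ?_
  have hc : (0 : ℝ) < ((2 : ℝ) ^ k i)⁻¹ := by positivity
  have h2 : ((2 : ℝ) ^ k i)⁻¹ * (2 ^ k i * x i) = x i := inv_mul_cancel_left₀ (by positivity) _
  obtain ⟨h₁, h₂⟩ := hxm i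
  exact ⟨h2 ▸ by gcongr, h2 ▸ by rw [add_comm]; gcongr⟩

end DyadicCell

-- At each point only finitely many terms of the sum are nonzero, so `tsum` is a finite sum.
noncomputable def mixedSpline (r d : ℕ) (k : Fin d → ℕ) (a : (Fin d → ℤ) → ℝ)
    (x : Fin d → ℝ) : ℝ :=
  ∑' s, a s * mixedBSpline r d k s x

theorem mixedSpline_dyadicCellMap (r : ℕ) {d : ℕ} (k : Fin d → ℕ) (a : (Fin d → ℤ) → ℝ)
    (m : Fin d → ℤ) {y : Fin d → ℝ} (hy : y ∈ unitCube d) :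
    mixedSpline r d k a (dyadicCellMap k m y) =
      ∑ s ∈ unitCubeSplineIndices r d, a (s + m) * mixedBSpline r d 0 s y := by
  simp only [mixedSpline, mixedBSpline_dyadicCellMap]
  rw [← (Equiv.addRight m).tsum_eq]
  simp only [Equiv.coe_addRight, add_sub_cancel_right]
  exact tsum_eq_sum fun s hs => by rw [mixedBSpline_zero_eq_zero_of_notMem hy hs, mul_zero]

theorem exists_eLpNorm_top_dyadicCell_le (r d : ℕ) {p : ℝ} (hp : 0 < p) :
    ∃ C : ℝ≥0, ∀ k m a,
      eLpNorm (mixedSpline r d k a) ∞ (volume.restrict (dyadicCell k m)) ≤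
        C * ((2 : ℝ≥0∞) ^ (∑ i, k i)) ^ (1 / p) *
          eLpNorm (mixedSpline r d k a) (ENNReal.ofReal p) (volume.restrict (dyadicCell k m)) := by
  set T := unitCubeSplineIndices r d
  obtain ⟨C, hC⟩ := exists_eLpNorm_top_sum_smul_le (μ := volume.restrict (unitCube d))
    (φ := fun s : T => mixedBSpline r d 0 s) (fun s => memLp_top_of_bound
      (measurable_mixedBSpline r d 0 s).aestronglyMeasurable 1
      (ae_of_all _ (norm_mixedBSpline_le_one r d 0 s))) hp
  refine ⟨C, fun k m a => ?_⟩
  have hcell : mixedSpline r d k a ∘ dyadicCellMap k m =ᵐ[volume.restrict (unitCube d)]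
      ∑ s : T, a (s + m) • mixedBSpline r d 0 s := by
    filter_upwards [ae_restrict_mem (measurableSet_unitCube d)] with y hy
    simp only [Function.comp_apply, mixedSpline_dyadicCellMap r k a m hy, Finset.sum_apply,
      Pi.smul_apply, smul_eq_mul]
    exact (Finset.sum_coe_sort T fun s => a (s + m) * mixedBSpline r d 0 s y).symm
  have h := hC fun s => a (s + m)
  rw [← eLpNorm_congr_ae hcell, ← eLpNorm_congr_ae hcell, eLpNorm_comp_dyadicCellMap,
    eLpNorm_comp_dyadicCellMap] at h
  simpa [ENNReal.toReal_ofReal hp.le, mul_assoc] using h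

theorem exists_eLpNorm_top_unitCube_le (r d : ℕ) {p : ℝ} (hp : 0 < p) :
    ∃ C : ℝ, 0 < C ∧ ∀ k a,
      eLpNorm (mixedSpline r d k a) ∞ (volume.restrict (unitCube d)) ≤
        ENNReal.ofReal (C * 2 ^ ((∑ i, (k i : ℝ)) / p)) *
          eLpNorm (mixedSpline r d k a) (ENNReal.ofReal p) (volume.restrict (unitCube d)) := by
  obtain ⟨C, hC⟩ := exists_eLpNorm_top_dyadicCell_le r d hp
  refine ⟨C + 1, by positivity, fun k a => ?_⟩
  have hfactor : (C : ℝ≥0∞) * ((2 : ℝ≥0∞) ^ (∑ i, k i)) ^ (1 / p) ≤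
      ENNReal.ofReal ((C + 1) * 2 ^ ((∑ i, (k i : ℝ)) / p)) := by
    rw [ENNReal.ofReal_mul (by positivity), ← ENNReal.ofReal_coe_nnreal, ← ENNReal.rpow_natCast,
      ← ENNReal.rpow_mul, ← ENNReal.ofReal_ofNat 2, ENNReal.ofReal_rpow_of_pos two_pos]
    push_cast
    rw [mul_one_div]
    gcongr
    linarith
  refine (eLpNorm_top_restrict_le_of_subset_biUnion (Set.to_countable _)
    (unitCube_subset_biUnion_dyadicCell k) (fun _ hm => dyadicCell_subset_unitCube k hm)
    fun m _ => hC k m a).trans ?_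
  gcongr

theorem mixed_bspline_nikolskii_general (r d : ℕ) (p q : ℝ) (hp : 0 < p) (hpq : p < q) :
    ∃ C : ℝ, 0 < C ∧
      ∀ (k : Fin d → ℕ) (a : (Fin d → ℤ) → ℝ),
        (∀ s, s ∉ mixedIndexSet r d k → a s = 0) →
        eLpNorm (fun x => ∑' s : Fin d → ℤ, a s * mixedBSpline r d k s x)
            (ENNReal.ofReal q) (volume.restrict (unitCube d)) ≤
          ENNReal.ofReal (C * (2 : ℝ) ^ ((1 / p - 1 / q) * ∑ i, (k i : ℝ))) *
            eLpNorm (fun x => ∑' s : Fin d → ℤ, a s * mixedBSpline r d k s x)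
              (ENNReal.ofReal p) (volume.restrict (unitCube d)) := by
  obtain ⟨C, hC, hbound⟩ := exists_eLpNorm_top_unitCube_le r d hp
  refine ⟨C ^ (1 - p / q), by positivity, fun k a _ => ?_⟩
  refine (eLpNorm_le_rpow_mul_eLpNorm_of_eLpNorm_top_le hp hpq (hbound k a)).trans_eq ?_
  have he : 0 ≤ 1 - p / q := by
    rw [sub_nonneg, div_le_one (hp.trans hpq)]
    exact hpq.le
  rw [ENNReal.ofReal_rpow_of_nonneg (by positivity) he,
    Real.mul_rpow hC.le (by positivity), ← Real.rpow_mul zero_le_two]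
  congr 4
  field_simp

/-- Nikol'skii inequality for mixed splines:
`‖g‖_q ≤ C 2^{(1/p-1/q)|k|_1} ‖g‖_p` for `g ∈ Σ_r^d(k)` and `0 < p < q < ∞`. -/
theorem mixed_bspline_nikolskii (r d : ℕ) (hr : 1 ≤ r) (hd : 0 < d)
    (p q : ℝ) (hp : 0 < p) (hpq : p < q) :
    ∃ C : ℝ, 0 < C ∧
      ∀ (k : Fin d → ℕ) (a : (Fin d → ℤ) → ℝ),
        (∀ s, s ∉ mixedIndexSet r d k → a s = 0) →
        eLpNorm (fun x => ∑' s : Fin d → ℤ, a s * mixedBSpline r d k s x)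
            (ENNReal.ofReal q) (volume.restrict (unitCube d)) ≤
          ENNReal.ofReal (C * (2 : ℝ) ^ ((1 / p - 1 / q) * ∑ i, (k i : ℝ))) *
            eLpNorm (fun x => ∑' s : Fin d → ℤ, a s * mixedBSpline r d k s x)
              (ENNReal.ofReal p) (volume.restrict (unitCube d)) :=
  mixed_bspline_nikolskii_general r d p q hp hpq
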